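/- Decay-norm bound for the solution of the homological equation: let d ≥ 1, τ > 0, γ > 0, N ≥ 2, ω ∈ ℝ^d, and let μ_{σ,j} ∈ ℂ be given for (σ,j) ∈ {−1,+1}×ℤ_{≥1}. For (σ,j), (σ',j') and ℓ ∈ ℤ^d set d_{σ,j}^{σ',j'}(ℓ) := iω·ℓ + μ_{σ,j} − μ_{σ',j'}, and assume the lower bounds: |d_{σ,j}^{σ',j'}(ℓ)| ≥ γ(j²+j'²)⟨ℓ⟩^{−τ} if σ ≠ σ'; |d_{σ,j}^{σ',j'}(ℓ)| ≥ γ(j+j')⟨ℓ⟩^{−τ} if σ = σ' and j ≠ j'; |d_{σ,j}^{σ,j}(ℓ)| ≥ γ⟨ℓ⟩^{−τ} if ℓ ≠ 0; for all |ℓ| ≤ N. Let E₁, E₀ be Töplitz-in-time matrices (entries E_{σ,j}^{σ',j'}(ℓ)) with (E₁)_{σ,j}^{σ,j'}(ℓ) = 0 for all σ, j, j', ℓ, and set R_{σ,j}^{σ',j'}(ℓ) := (E₁)_{σ,j}^{σ',j'}(ℓ)·j' + (E₀)_{σ,j}^{σ',j'}(ℓ). Define Ψ by Ψ_{σ,j}^{σ',j'}(ℓ)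 := −R_{σ,j}^{σ',j'}(ℓ)/d_{σ,j}^{σ',j'}(ℓ) whenever |ℓ| ≤ N and (σ,j,ℓ) ≠ (σ',j',0), and Ψ_{σ,j}^{σ',j'}(ℓ) := 0 otherwise. Then for every s ≥ 0: |Ψ|_s ≤ C γ^{−1} N^{τ} ( |E₁|_s + |E₀|_s ) for a constant C depending only on τ. -/

import Mathlib

/-!
On the support of `Ψ` the divisor is bounded below by `γ B ⟨ℓ⟩^{-τ}`, with `B = j² + j'²` if
`σ ≠ σ'`, `B = j + j'` if `σ = σ'`, `j ≠ j'`, and `B = 1` on the diagonal. Always `B ≥ 1`, and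
`B ≥ j'` wherever `E₁` can be nonzero, since `E₁` vanishes for `σ = σ'`. This gives the entrywise
bound `|Ψ| ≤ γ⁻¹ N^τ (|E₁| + |E₀|)`, and entrywise bounds pass to the decay norm up to the factor
`2` coming from `(a + b)² ≤ 2 (a² + b²)`.
-/

open scoped ENNReal NNReal

/-- The weight `⟨(h,ℓ)⟩ = max(1,|(h,ℓ)|)` (`|·|` the sup norm) of `(h,ℓ) ∈ ℤ × ℤᵈ`. -/
noncomputable def hwt {d : ℕ} (h : ℤ × (Fin d → ℤ)) : ℝ≥0∞ :=
  ((max 1 (max h.1.natAbs (Finset.univ.sup fun i => (h.2 i).natAbs)) : ℕ) : ℝ≥0∞)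

/-- The `s`-decay norm of a Töplitz-in-time matrix indexed by
`{−1,+1} × ℤ_{≥1} × ℤᵈ`, given through its coefficients `A_{σ,j}^{σ',j'}(ℓ)`. -/
noncomputable def tnorm (d : ℕ) (s : ℝ)
    (A : Bool → ℕ → Bool → ℕ → (Fin d → ℤ) → ℂ) : ℝ≥0∞ :=
  (⨆ σ : Bool, ⨆ σ' : Bool,
    ∑' h : ℤ × (Fin d → ℤ),
      hwt h ^ (2 * s) *
        (⨆ p : {q : ℕ × ℕ // (q.1 : ℤ) - (q.2 : ℤ) = h.1 ∧ 1 ≤ q.1 ∧ 1 ≤ q.2},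
          (‖A σ (p : ℕ × ℕ).1 σ' (p : ℕ × ℕ).2 h.2‖₊ : ℝ≥0∞)) ^ (2 : ℕ)) ^ (1 / 2 : ℝ)

theorem ENNReal.add_sq_le_two_mul (a b : ℝ≥0∞) : (a + b) ^ 2 ≤ 2 * (a ^ 2 + b ^ 2) := by
  have := ENNReal.rpow_add_le_mul_rpow_add_rpow a b one_le_two
  rwa [show (2 : ℝ) - 1 = 1 by norm_num, ENNReal.rpow_one, ENNReal.rpow_two, ENNReal.rpow_two,
    ENNReal.rpow_two] at this

theorem Complex.norm_mul_natCast_add_div_le {e₁ e₀ z : ℂ} {j : ℕ} {γ B w : ℝ} (hγ : 0 < γ)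
    (hw : 0 < w) (hB : 1 ≤ B) (hjB : e₁ ≠ 0 → (j : ℝ) ≤ B) (hz : γ * B / w ≤ ‖z‖) :
    ‖(e₁ * j + e₀) / z‖ ≤ w / γ * (‖e₁‖ + ‖e₀‖) := by
  have hnum : ‖e₁ * j + e₀‖ ≤ (‖e₁‖ + ‖e₀‖) * B := by
    have hj : ‖e₁‖ * j ≤ ‖e₁‖ * B := by
      rcases eq_or_ne e₁ 0 with rfl | he₁
      · simp
      · exact mul_le_mul_of_nonneg_left (hjB he₁) (norm_nonneg _)
    calc ‖e₁ * j + e₀‖ ≤ ‖e₁‖ * j + ‖e₀‖ := by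
          simpa using norm_add_le (e₁ * j) e₀
      _ ≤ ‖e₁‖ * B + ‖e₀‖ * B := add_le_add hj (le_mul_of_one_le_right (norm_nonneg _) hB)
      _ = (‖e₁‖ + ‖e₀‖) * B := by ring
  calc ‖(e₁ * j + e₀) / z‖ ≤ (‖e₁‖ + ‖e₀‖) * B / (γ * B / w) := by
        rw [norm_div]
        exact div_le_div₀ (by positivity) hnum (by positivity) hz
    _ = w / γ * (‖e₁‖ + ‖e₀‖) := by field_simp

section DecayNorm

variable {d : ℕ}

noncomputable def diagonalSup (A : Bool → ℕ → Bool → ℕ → (Fin d → ℤ) → ℂ) (σ σ' : Bool)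
    (h : ℤ × (Fin d → ℤ)) : ℝ≥0∞ :=
  ⨆ p : {q : ℕ × ℕ // (q.1 : ℤ) - (q.2 : ℤ) = h.1 ∧ 1 ≤ q.1 ∧ 1 ≤ q.2},
    (‖A σ (p : ℕ × ℕ).1 σ' (p : ℕ × ℕ).2 h.2‖₊ : ℝ≥0∞)

noncomputable def decaySum (s : ℝ) (A : Bool → ℕ → Bool → ℕ → (Fin d → ℤ) → ℂ)
    (σ σ' : Bool) : ℝ≥0∞ :=
  ∑' h : ℤ × (Fin d → ℤ), hwt h ^ (2 * s) * diagonalSup A σ σ' h ^ 2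

variable {s : ℝ} {A B E : Bool → ℕ → Bool → ℕ → (Fin d → ℤ) → ℂ}

theorem tnorm_eq_iSup_decaySum :
    tnorm d s A = (⨆ σ, ⨆ σ', decaySum s A σ σ') ^ (1 / 2 : ℝ) :=
  rfl

theorem diagonalSup_le_of_norm_le {K : ℝ} (hK : 0 ≤ K)
    (hA : ∀ σ σ' j j', 1 ≤ j → 1 ≤ j' → ∀ ℓ,
      ‖A σ j σ' j' ℓ‖ ≤ K * (‖B σ j σ' j' ℓ‖ + ‖E σ j σ' j' ℓ‖))
    (σ σ' : Bool) (h : ℤ × (Fin d → ℤ)) :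
    diagonalSup A σ σ' h ≤
      ENNReal.ofReal K * (diagonalSup B σ σ' h + diagonalSup E σ σ' h) := by
  refine iSup_le fun ⟨(j, j'), _, hj, hj'⟩ => ?_
  calc (‖A σ j σ' j' h.2‖₊ : ℝ≥0∞) = ENNReal.ofReal ‖A σ j σ' j' h.2‖ := (ofReal_norm _).symm
    _ ≤ ENNReal.ofReal (K * (‖B σ j σ' j' h.2‖ + ‖E σ j σ' j' h.2‖)) :=
        ENNReal.ofReal_le_ofReal (hA σ σ' j j' hj hj' h.2)
    _ = ENNReal.ofReal K * (‖B σ j σ' j' h.2‖₊ + ‖E σ j σ' j' h.2‖₊) := by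
        rw [ENNReal.ofReal_mul hK, ENNReal.ofReal_add (norm_nonneg _) (norm_nonneg _),
          ofReal_norm, ofReal_norm]
        rfl
    _ ≤ _ := by
        gcongr <;> exact le_iSup_of_le ⟨(j, j'), ‹_›, hj, hj'⟩ le_rfl

theorem decaySum_le_of_diagonalSup_le {K : ℝ≥0∞} {σ σ' : Bool}
    (hA : ∀ h, diagonalSup A σ σ' h ≤ K * (diagonalSup B σ σ' h + diagonalSup E σ σ' h)) :
    decaySum s A σ σ' ≤ (2 * K) ^ 2 * (decaySum s B σ σ' + decaySum s E σ σ') := by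
  rw [decaySum, decaySum, decaySum, ← ENNReal.tsum_add, ← ENNReal.tsum_mul_left]
  refine ENNReal.tsum_le_tsum fun h => ?_
  set a := diagonalSup B σ σ' h
  set b := diagonalSup E σ σ' h
  calc hwt h ^ (2 * s) * diagonalSup A σ σ' h ^ 2
      ≤ hwt h ^ (2 * s) * (K ^ 2 * (2 * (a ^ 2 + b ^ 2))) := by
        gcongr
        exact (pow_le_pow_left' (hA h) 2).trans
          (by rw [mul_pow]; gcongr; exact ENNReal.add_sq_le_two_mul a b)
    _ ≤ hwt h ^ (2 * s) * (K ^ 2 * (4 * (a ^ 2 + b ^ 2))) := by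
        gcongr; norm_num
    _ = _ := by ring

theorem tnorm_le_of_decaySum_le {c : ℝ≥0∞}
    (hA : ∀ σ σ', decaySum s A σ σ' ≤ c ^ 2 * (decaySum s B σ σ' + decaySum s E σ σ')) :
    tnorm d s A ≤ c * (tnorm d s B + tnorm d s E) := by
  have hhalf : (0 : ℝ) ≤ 1 / 2 := by norm_num
  rw [tnorm_eq_iSup_decaySum, tnorm_eq_iSup_decaySum, tnorm_eq_iSup_decaySum]
  set SB := ⨆ σ, ⨆ σ', decaySum s B σ σ'
  set SE := ⨆ σ, ⨆ σ', decaySum s E σ σ'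
  calc (⨆ σ, ⨆ σ', decaySum s A σ σ') ^ (1 / 2 : ℝ) ≤ (c ^ 2 * (SB + SE)) ^ (1 / 2 : ℝ) := by
        refine ENNReal.rpow_le_rpow (iSup₂_le fun σ σ' => (hA σ σ').trans ?_) hhalf
        gcongr <;> exact le_iSup₂ (f := fun σ σ' => decaySum s _ σ σ') σ σ'
    _ = c * (SB + SE) ^ (1 / 2 : ℝ) := by
        rw [ENNReal.mul_rpow_of_nonneg _ _ hhalf, ← ENNReal.rpow_natCast, ← ENNReal.rpow_mul]
        norm_num
    _ ≤ c * (SB ^ (1 / 2 : ℝ) + SE ^ (1 / 2 : ℝ)) := by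
        gcongr
        exact ENNReal.rpow_add_le_add_rpow _ _ hhalf (by norm_num)

theorem tnorm_le_of_norm_le {K : ℝ} (hK : 0 ≤ K)
    (hA : ∀ σ σ' j j', 1 ≤ j → 1 ≤ j' → ∀ ℓ,
      ‖A σ j σ' j' ℓ‖ ≤ K * (‖B σ j σ' j' ℓ‖ + ‖E σ j σ' j' ℓ‖)) :
    tnorm d s A ≤ ENNReal.ofReal (2 * K) * (tnorm d s B + tnorm d s E) := by
  refine tnorm_le_of_decaySum_le fun σ σ' => ?_
  rw [ENNReal.ofReal_mul zero_le_two, ENNReal.ofReal_ofNat]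
  exact decaySum_le_of_diagonalSup_le (diagonalSup_le_of_norm_le hK hA σ σ')

end DecayNorm

/-- Decay-norm bound for the solution of the homological equation: under the
second Melnikov lower bounds on the divisors `d_{σ,j}^{σ',j'}(ℓ) = iω·ℓ + μ_{σ,j} −
μ_{σ',j'}`, the solution `Ψ = −R/d` (truncated to `|ℓ| ≤ N`, with
`R = E₁ D + E₀`, `D = diag(j)`) satisfies `|Ψ|ₛ ≤ C γ⁻¹ N^τ (|E₁|ₛ + |E₀|ₛ)`
with `C = C(τ)`. -/
theorem homological_equation_decay_bound (τ : ℝ) (hτ : 0 < τ) :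
    ∃ C : ℝ, 0 < C ∧
      ∀ (d : ℕ), 1 ≤ d →
      ∀ (γ : ℝ), 0 < γ →
      ∀ (N : ℕ), 2 ≤ N →
      ∀ (ω : Fin d → ℝ) (μ : Bool → ℕ → ℂ)
        (E₁ E₀ Ψ : Bool → ℕ → Bool → ℕ → (Fin d → ℤ) → ℂ),
        -- lower bound on the divisors, case σ ≠ σ'
        (∀ (σ σ' : Bool) (j j' : ℕ) (ℓ : Fin d → ℤ), 1 ≤ j → 1 ≤ j' →
          (Finset.univ.sup fun t => (ℓ t).natAbs) ≤ N → σ ≠ σ' →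
          γ * ((j : ℝ) ^ 2 + (j' : ℝ) ^ 2) /
              ((max 1 (Finset.univ.sup fun t => (ℓ t).natAbs) : ℕ) : ℝ) ^ τ ≤
            ‖Complex.I * ((∑ i, ω i * (ℓ i : ℝ) : ℝ) : ℂ) + μ σ j - μ σ' j'‖) →
        -- lower bound, case σ = σ', j ≠ j'
        (∀ (σ : Bool) (j j' : ℕ) (ℓ : Fin d → ℤ), 1 ≤ j → 1 ≤ j' → j ≠ j' →
          (Finset.univ.sup fun t => (ℓ t).natAbs) ≤ N →
          γ * ((j : ℝ) + (j' : ℝ)) /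
              ((max 1 (Finset.univ.sup fun t => (ℓ t).natAbs) : ℕ) : ℝ) ^ τ ≤
            ‖Complex.I * ((∑ i, ω i * (ℓ i : ℝ) : ℝ) : ℂ) + μ σ j - μ σ j'‖) →
        -- lower bound, case σ = σ', j = j', ℓ ≠ 0
        (∀ (σ : Bool) (j : ℕ) (ℓ : Fin d → ℤ), 1 ≤ j → ℓ ≠ 0 →
          (Finset.univ.sup fun t => (ℓ t).natAbs) ≤ N →
          γ / ((max 1 (Finset.univ.sup fun t => (ℓ t).natAbs) : ℕ) : ℝ) ^ τ ≤
            ‖Complex.I * ((∑ i, ω i * (ℓ i : ℝ) : ℝ) : ℂ)‖) →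
        -- E₁ has no diagonal (in σ) part
        (∀ (σ : Bool) (j j' : ℕ) (ℓ : Fin d → ℤ), E₁ σ j σ j' ℓ = 0) →
        -- definition of Ψ
        (∀ (σ σ' : Bool) (j j' : ℕ) (ℓ : Fin d → ℤ), 1 ≤ j → 1 ≤ j' →
          Ψ σ j σ' j' ℓ =
            if (Finset.univ.sup fun t => (ℓ t).natAbs) ≤ N ∧ ¬(σ = σ' ∧ j = j' ∧ ℓ = 0)
            then -(E₁ σ j σ' j' ℓ * (j' : ℂ) + E₀ σ j σ' j' ℓ) /
                (Complex.I * ((∑ i, ω i * (ℓ i : ℝ) : ℝ) : ℂ) + μ σ j - μ σ' j')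
            else 0) →
        ∀ s : ℝ, 0 ≤ s →
          tnorm d s Ψ ≤
            ENNReal.ofReal (C / γ * (N : ℝ) ^ τ) * (tnorm d s E₁ + tnorm d s E₀) := by
  refine ⟨2, two_pos, fun d _ γ hγ N hN ω μ E₁ E₀ Ψ h1 h2 h3 hE₁ hΨ s _ => ?_⟩
  have hΨ_le : ∀ σ σ' j j', 1 ≤ j → 1 ≤ j' → ∀ ℓ,
      ‖Ψ σ j σ' j' ℓ‖ ≤ (N : ℝ) ^ τ / γ * (‖E₁ σ j σ' j' ℓ‖ + ‖E₀ σ j σ' j' ℓ‖) := by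
    intro σ σ' j j' hj hj' ℓ
    rw [hΨ σ σ' j j' ℓ hj hj']
    split_ifs with hsupp
    · obtain ⟨hℓN, hne⟩ := hsupp
      obtain ⟨B, hB, hj'B, hdiv⟩ : ∃ B : ℝ, 1 ≤ B ∧ (E₁ σ j σ' j' ℓ ≠ 0 → (j' : ℝ) ≤ B) ∧
          γ * B / ((max 1 (Finset.univ.sup fun t => (ℓ t).natAbs) : ℕ) : ℝ) ^ τ ≤
            ‖Complex.I * ((∑ i, ω i * (ℓ i : ℝ) : ℝ) : ℂ) + μ σ j - μ σ' j'‖ := by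
        have hj₁ : (1 : ℝ) ≤ j := by exact_mod_cast hj
        have hj'₁ : (1 : ℝ) ≤ j' := by exact_mod_cast hj'
        rcases eq_or_ne σ σ' with rfl | hσ
        · rcases eq_or_ne j j' with rfl | hjj
          · refine ⟨1, le_rfl, fun h => absurd (hE₁ σ j j ℓ) h, ?_⟩
            simpa using h3 σ j ℓ hj (fun h0 => hne ⟨rfl, rfl, h0⟩) hℓN
          · exact ⟨j + j', by linarith, fun h => absurd (hE₁ σ j j' ℓ) h,
              h2 σ j j' ℓ hj hj' hjj hℓN⟩
        · exact ⟨j ^ 2 + j' ^ 2, by nlinarith, fun _ => by nlinarith, h1 σ σ' j j' ℓ hj hj' hℓN hσ⟩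
      rw [neg_div, norm_neg]
      refine (Complex.norm_mul_natCast_add_div_le hγ (by positivity) hB hj'B hdiv).trans ?_
      gcongr
      exact_mod_cast max_le (by omega) hℓN
    · simp only [norm_zero]
      positivity
  convert tnorm_le_of_norm_le (by positivity) hΨ_le using 3
  ring
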